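/- (Fixed-lag forgetting bound, inequality (A.14).) Assume (A1). Let 0 ≤ k, Δ ≥ 1 and n be integers with k + Δ ≤ n, and let s_k be a bounded measurable function on X². Then |φ_{ν,0:k+Δ|k+Δ} s_k − φ_{ν,0:n|n} s_k| ≤ 2 ρ^{Δ} ‖s_k‖_∞, where φ_{ν,0:m|m} s_k denotes the integral of (x_{0:m}) ↦ s_k(x_k, x_{k+1}) with respect to the joint smoothing distribution given the observations y₀,…,y_m, ‖s_k‖_∞ := sup_{x,x'} |s_k(x, x')| and ρ = 1 − σ₋/σ₊. -/

import Mathlib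

/-!
Both expectations are tilted means `∫ P β H / ∫ P β`, where `P` is the unnormalised filter at
time `k + Δ`, `H(x)` is the backward conditional expectation of `s(x_k, x_{k+1})` given
`x_{k+Δ} = x`, and `β` is the backward function from `k + Δ` to the horizon (`β = 1` for the
horizon `k + Δ`). Under (A1) the transition densities `q(·, x)` and all backward functions vary
by at most a factor `σ₋/σ₊`, and Doeblin's argument shows that changing such a tilt moves a tilted
mean by at most `ρ` times the oscillation of the integrand. Along the backward recursion for `H`
this gives `osc H ≤ 2 ρ^{Δ-1} ‖s‖_∞`, and one more application to the two tilts `β` gives the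
bound.
-/

open MeasureTheory

noncomputable section

variable {X : Type*} [MeasurableSpace X] {Y : Type*}

/-- `LF μ q g ys n m f x` is the iterated unnormalized smoothing operator
`(L_{n-m} ⋯ L_{n-1} f)(x_{0:n-m})`, paths being represented as elements of `ℕ → X`. -/
def LF (μ : Measure X) (q : X → X → ℝ) (g : X → Y → ℝ) (ys : ℕ → Y) (n : ℕ) :
    ℕ → ((ℕ → X) → ℝ) → (ℕ → X) → ℝ
  | 0, f, x => f x
  | m + 1, f, x =>
      ∫ x', g x' (ys (n - m)) * q (x (n - m - 1)) x' *
        LF μ q g ys n m f (Function.update x (n - m) x') ∂μ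

/-- `smoothExp μ ν q g ys m f = φ_{ν,0:m|m} f`, the expectation of `f` under
the joint smoothing distribution given the observations `y₀, …, y_m`. -/
def smoothExp (μ ν : Measure X) (q : X → X → ℝ) (g : X → Y → ℝ) (ys : ℕ → Y)
    (m : ℕ) (f : (ℕ → X) → ℝ) : ℝ :=
  (∫ x₀, g x₀ (ys 0) * LF μ q g ys m m f (fun _ => x₀) ∂ν) /
    ∫ x₀, g x₀ (ys 0) * LF μ q g ys m m (fun _ => 1) (fun _ => x₀) ∂ν

open Function Set

section BoundedMeasurable

variable {α β : Type*} [MeasurableSpace α] [MeasurableSpace β]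

def BoundedMeasurable (f : α → ℝ) : Prop :=
  Measurable f ∧ ∃ C, ∀ x, |f x| ≤ C

namespace BoundedMeasurable

variable {f h : α → ℝ}

lemma integrable (hf : BoundedMeasurable f) {μ : Measure α} [IsFiniteMeasure μ] :
    Integrable f μ :=
  let ⟨C, hC⟩ := hf.2
  .of_bound hf.1.aestronglyMeasurable C (.of_forall hC)

lemma const (c : ℝ) : BoundedMeasurable fun _ : α => c :=
  ⟨measurable_const, |c|, fun _ => le_rfl⟩

lemma mul (hf : BoundedMeasurable f) (hh : BoundedMeasurable h) :
    BoundedMeasurable fun x => f x * h x := by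
  obtain ⟨C, hC⟩ := hf.2
  obtain ⟨D, hD⟩ := hh.2
  refine ⟨hf.1.mul hh.1, C * D, fun x => ?_⟩
  rw [abs_mul]
  exact mul_le_mul (hC x) (hD x) (abs_nonneg _) ((abs_nonneg _).trans (hC x))

lemma sub (hf : BoundedMeasurable f) (hh : BoundedMeasurable h) :
    BoundedMeasurable fun x => f x - h x := by
  obtain ⟨C, hC⟩ := hf.2
  obtain ⟨D, hD⟩ := hh.2
  exact ⟨hf.1.sub hh.1, C + D, fun x => (abs_sub _ _).trans (add_le_add (hC x) (hD x))⟩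

lemma div_const (hf : BoundedMeasurable f) (c : ℝ) : BoundedMeasurable fun x => f x / c := by
  simpa only [div_eq_mul_inv] using hf.mul (const c⁻¹)

lemma comp (hf : BoundedMeasurable f) {φ : β → α} (hφ : Measurable φ) :
    BoundedMeasurable (f ∘ φ) :=
  ⟨hf.1.comp hφ, hf.2.imp fun _ hC x => hC (φ x)⟩

lemma integral_prod_right {F : α × β → ℝ} (hF : BoundedMeasurable F) {ν : Measure β}
    [IsFiniteMeasure ν] : BoundedMeasurable fun x => ∫ y, F (x, y) ∂ν := by
  obtain ⟨C, hC⟩ := hF.2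
  refine ⟨hF.1.stronglyMeasurable.integral_prod_right'.measurable, C * ν.real univ,
    fun x => ?_⟩
  simpa only [Real.norm_eq_abs] using
    norm_integral_le_of_norm_le_const (μ := ν)
      (.of_forall fun y => (Real.norm_eq_abs _).trans_le (hC (x, y)))

lemma integral_integral_swap {F : α → β → ℝ} (hF : BoundedMeasurable (uncurry F))
    {μ : Measure α} {ν : Measure β} [IsFiniteMeasure μ] [IsFiniteMeasure ν] :
    ∫ x, ∫ y, F x y ∂ν ∂μ = ∫ y, ∫ x, F x y ∂μ ∂ν :=
  MeasureTheory.integral_integral_swap hF.integrable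

end BoundedMeasurable

end BoundedMeasurable

section Integral

variable {α : Type*} [MeasurableSpace α] {μ : Measure α}

lemma nonempty_of_integral_ne_zero {f : α → ℝ} (h : ∫ x, f x ∂μ ≠ 0) : Nonempty α := by
  by_contra hα
  rw [not_nonempty_iff] at hα
  simp [Measure.eq_zero_of_isEmpty μ] at h

lemma integral_mul_pos_of_le [IsFiniteMeasure μ] {w h : α → ℝ} (hw : BoundedMeasurable w)
    (hw0 : ∀ x, 0 ≤ w x) (hwpos : 0 < ∫ x, w x ∂μ) (hh : BoundedMeasurable h) {c : ℝ}
    (hc : 0 < c) (hch : ∀ x, c ≤ h x) : 0 < ∫ x, w x * h x ∂μ := by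
  refine (mul_pos hc hwpos).trans_le ?_
  rw [← integral_const_mul]
  exact integral_mono (hw.integrable.const_mul c) (hw.mul hh).integrable fun x => by
    simpa only [mul_comm c] using mul_le_mul_of_nonneg_left (hch x) (hw0 x)

lemma integral_mul_eq_zero_of_integral_eq_zero {w : α → ℝ} (hw0 : ∀ x, 0 ≤ w x)
    (hw : Integrable w μ) (h : ∫ x, w x ∂μ = 0) (φ : α → ℝ) : ∫ x, w x * φ x ∂μ = 0 := by
  have hw_ae : w =ᵐ[μ] 0 := (integral_eq_zero_iff_of_nonneg hw0 hw).1 h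
  exact integral_eq_zero_of_ae (by filter_upwards [hw_ae] with x hx; simp [hx])

end Integral

section Tilting

lemma exists_forall_abs_sub_le_half {α : Type*} {H : α → ℝ} {D : ℝ}
    (hD : ∀ x y, |H x - H y| ≤ D) : ∃ c, ∀ x, |H x - c| ≤ D / 2 := by
  rcases isEmpty_or_nonempty α with hα | hα
  · exact ⟨0, fun x => isEmptyElim x⟩
  have hbdd : BddBelow (range H) := by
    obtain ⟨x₀⟩ := hα
    exact ⟨H x₀ - D, forall_mem_range.2 fun y => by linarith [(abs_le.1 (hD x₀ y)).2]⟩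
  refine ⟨(⨅ y, H y) + D / 2, fun x => abs_le.2 ⟨?_, ?_⟩⟩
  · linarith [ciInf_le hbdd x]
  · linarith [le_ciInf fun y => show H x - D ≤ H y by linarith [(abs_le.1 (hD x y)).2]]

variable {α : Type*} [MeasurableSpace α] {μ : Measure α}

def tiltedMean (μ : Measure α) (P γ H : α → ℝ) : ℝ :=
  (∫ x, P x * γ x * H x ∂μ) / ∫ x, P x * γ x ∂μ

lemma abs_tiltedMean_le [IsFiniteMeasure μ] {P γ H : α → ℝ} {C : ℝ} (hP : BoundedMeasurable P)
    (hγ : BoundedMeasurable γ) (hH : BoundedMeasurable H) (hPγ : ∀ x, 0 ≤ P x * γ x)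
    (hZ : 0 < ∫ x, P x * γ x ∂μ) (hC : ∀ x, |H x| ≤ C) :
    |tiltedMean μ P γ H| ≤ C := by
  rw [tiltedMean, abs_div, abs_of_pos hZ, div_le_iff₀ hZ, ← integral_const_mul]
  refine abs_integral_le_integral_abs.trans (integral_mono ((hP.mul hγ).mul hH).integrable.abs
    ((hP.mul hγ).integrable.const_mul C) fun x => ?_)
  rw [abs_mul, abs_of_nonneg (hPγ x), mul_comm C]
  exact mul_le_mul_of_nonneg_left (hC x) (hPγ x)

lemma integral_abs_sub_le_of_minorant {p₀ p₁ p₂ : α → ℝ} {ε : ℝ} (hp₀ : Integrable p₀ μ)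
    (hp₁ : Integrable p₁ μ) (hp₂ : Integrable p₂ μ) (h₁ : ∀ x, ε * p₀ x ≤ p₁ x)
    (h₂ : ∀ x, ε * p₀ x ≤ p₂ x) (hp₀1 : ∫ x, p₀ x ∂μ = 1) (hp₁1 : ∫ x, p₁ x ∂μ = 1)
    (hp₂1 : ∫ x, p₂ x ∂μ = 1) :
    ∫ x, |p₁ x - p₂ x| ∂μ ≤ 2 * (1 - ε) := by
  have hr₁ : Integrable (fun x => p₁ x - ε * p₀ x) μ := hp₁.sub (hp₀.const_mul ε)
  have hr₂ : Integrable (fun x => p₂ x - ε * p₀ x) μ := hp₂.sub (hp₀.const_mul ε)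
  calc ∫ x, |p₁ x - p₂ x| ∂μ ≤ ∫ x, ((p₁ x - ε * p₀ x) + (p₂ x - ε * p₀ x)) ∂μ :=
        integral_mono (hp₁.sub hp₂).abs (hr₁.add hr₂) fun x => by
          simp only; rw [abs_le]; constructor <;> linarith [h₁ x, h₂ x]
    _ = 2 * (1 - ε) := by
        rw [integral_add hr₁ hr₂, integral_sub hp₁ (hp₀.const_mul ε),
          integral_sub hp₂ (hp₀.const_mul ε), integral_const_mul, hp₀1, hp₁1, hp₂1]
        ring

lemma abs_integral_mul_sub_le {H p₁ p₂ : α → ℝ} {D : ℝ} (hH : BoundedMeasurable H)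
    (hp₁ : Integrable p₁ μ) (hp₂ : Integrable p₂ μ) (hp : ∫ x, p₁ x ∂μ = ∫ x, p₂ x ∂μ)
    (hD : ∀ x y, |H x - H y| ≤ D) :
    |∫ x, H x * p₁ x ∂μ - ∫ x, H x * p₂ x ∂μ| ≤ D / 2 * ∫ x, |p₁ x - p₂ x| ∂μ := by
  obtain ⟨c, hc⟩ := exists_forall_abs_sub_le_half hD
  obtain ⟨CH, hCH⟩ := hH.2
  have hHc : BoundedMeasurable fun x => H x - c := hH.sub (.const c)
  have hint : ∀ {p : α → ℝ}, Integrable p μ → Integrable (fun x => (H x - c) * p x) μ :=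
    fun hp => hp.bdd_mul hHc.1.aestronglyMeasurable (c := CH + |c|)
      (.of_forall fun x => (abs_sub _ _).trans (add_le_add (hCH x) le_rfl))
  have hcentre : ∫ x, H x * p₁ x ∂μ - ∫ x, H x * p₂ x ∂μ =
      ∫ x, (H x - c) * (p₁ x - p₂ x) ∂μ := by
    have hHp : ∀ {p : α → ℝ}, Integrable p μ →
        ∫ x, (H x - c) * p x ∂μ = ∫ x, H x * p x ∂μ - c * ∫ x, p x ∂μ := fun hp => by
      simp only [sub_mul]
      rw [← integral_const_mul]
      exact integral_sub (hp.bdd_mul hH.1.aestronglyMeasurable (.of_forall hCH))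
        (hp.const_mul c)
    simp only [mul_sub]
    rw [integral_sub (hint hp₁) (hint hp₂), hHp hp₁, hHp hp₂, hp]
    ring
  rw [hcentre, ← integral_const_mul]
  refine abs_integral_le_integral_abs.trans (integral_mono ?_ ?_ fun x => ?_)
  · have h : Integrable (fun x => (H x - c) * p₁ x - (H x - c) * p₂ x) μ :=
      (hint hp₁).sub (hint hp₂)
    simpa only [mul_sub] using h.abs
  · exact (hp₁.sub hp₂).abs.const_mul _
  · simp only
    rw [abs_mul]
    exact mul_le_mul_of_nonneg_right (hc x) (abs_nonneg _)

lemma mul_integral_mul_le [IsFiniteMeasure μ] {P γ : α → ℝ} {ε : ℝ} (hP : BoundedMeasurable P)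
    (hγ : BoundedMeasurable γ) (hP0 : ∀ x, 0 ≤ P x) (hγε : ∀ x y, ε * γ y ≤ γ x) (x : α) :
    ε * ∫ y, P y * γ y ∂μ ≤ γ x * ∫ y, P y ∂μ := by
  rw [← integral_const_mul, ← integral_const_mul]
  refine integral_mono ((hP.mul hγ).integrable.const_mul ε) (hP.integrable.const_mul _)
    fun y => ?_
  simp only
  rw [mul_left_comm, mul_comm (γ x)]
  exact mul_le_mul_of_nonneg_left (hγε x y) (hP0 y)

lemma tiltedMean_eq_integral (P γ H : α → ℝ) :
    tiltedMean μ P γ H = ∫ x, H x * (P x * γ x / ∫ y, P y * γ y ∂μ) ∂μ := by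
  rw [tiltedMean, ← integral_div]
  congr 1 with x
  ring

/-- Doeblin's argument: the tilts `γᵢ` vary by a factor at most `ε⁻¹`, so both tilted
densities dominate `ε` times the untilted one, and only the residual mass `1 - ε` can
differ. -/
theorem abs_tiltedMean_sub_le [IsFiniteMeasure μ] {P γ₁ γ₂ H : α → ℝ} {ε D : ℝ}
    (hP : BoundedMeasurable P) (hP0 : ∀ x, 0 ≤ P x) (hγ₁ : BoundedMeasurable γ₁)
    (hγ₂ : BoundedMeasurable γ₂) (hH : BoundedMeasurable H) (hε : 0 < ε)
    (h₁ : ∀ x y, ε * γ₁ y ≤ γ₁ x) (h₂ : ∀ x y, ε * γ₂ y ≤ γ₂ x)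
    (hZ₁ : 0 < ∫ x, P x * γ₁ x ∂μ) (hZ₂ : 0 < ∫ x, P x * γ₂ x ∂μ)
    (hD : ∀ x y, |H x - H y| ≤ D) :
    |tiltedMean μ P γ₁ H - tiltedMean μ P γ₂ H| ≤ (1 - ε) * D := by
  obtain ⟨x₀⟩ := nonempty_of_integral_ne_zero hZ₁.ne'
  have hZ₀ : 0 < ∫ x, P x ∂μ := by
    refine (integral_nonneg hP0).lt_of_ne fun h => ?_
    have := mul_integral_mul_le (μ := μ) hP hγ₁ hP0 h₁ x₀
    rw [← h, mul_zero] at this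
    exact (mul_pos hε hZ₁).not_ge this
  have hdens : ∀ {γ : α → ℝ}, BoundedMeasurable γ → (∀ x y, ε * γ y ≤ γ x) →
      0 < ∫ x, P x * γ x ∂μ → Integrable (fun x => P x * γ x / ∫ y, P y * γ y ∂μ) μ ∧
        ∫ x, P x * γ x / (∫ y, P y * γ y ∂μ) ∂μ = 1 ∧
        ∀ x, ε * (P x / ∫ y, P y ∂μ) ≤ P x * γ x / ∫ y, P y * γ y ∂μ := by
    intro γ hγ hγε hZ
    refine ⟨(hP.mul hγ).div_const _ |>.integrable, by rw [integral_div, div_self hZ.ne'],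
      fun x => ?_⟩
    rw [mul_div_assoc', div_le_div_iff₀ hZ₀ hZ]
    have := mul_le_mul_of_nonneg_left (mul_integral_mul_le (μ := μ) hP hγ hP0 hγε x) (hP0 x)
    linarith
  obtain ⟨i₁, n₁, m₁⟩ := hdens hγ₁ h₁ hZ₁
  obtain ⟨i₂, n₂, m₂⟩ := hdens hγ₂ h₂ hZ₂
  have hD0 : 0 ≤ D := (abs_nonneg _).trans (hD x₀ x₀)
  rw [tiltedMean_eq_integral, tiltedMean_eq_integral]
  calc _ ≤ D / 2 * ∫ x, |P x * γ₁ x / (∫ y, P y * γ₁ y ∂μ) - P x * γ₂ x / ∫ y, P y * γ₂ y ∂μ| ∂μ :=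
        abs_integral_mul_sub_le hH i₁ i₂ (n₁.trans n₂.symm) hD
    _ ≤ D / 2 * (2 * (1 - ε)) := by
        gcongr
        exact integral_abs_sub_le_of_minorant ((hP.div_const _).integrable) i₁ i₂ m₁ m₂
          (by rw [integral_div, div_self hZ₀.ne']) n₁ n₂
    _ = (1 - ε) * D := by ring

end Tilting

/-- Assumption (A1), with `σm`, `σp` standing for `σ₋`, `σ₊`. -/
structure StrongMixing (μ : Measure X) (q : X → X → ℝ) (g : X → Y → ℝ) (σm σp : ℝ) : Prop where
  σm_pos : 0 < σm
  measurable_q : Measurable (uncurry q)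
  le_q : ∀ a b, σm ≤ q a b
  q_le : ∀ a b, q a b ≤ σp
  measurable_g : ∀ y, Measurable fun x => g x y
  g_nonneg : ∀ x y, 0 ≤ g x y
  bddAbove_g : ∀ y, ∃ C, ∀ x, g x y ≤ C
  integral_g_pos : ∀ y, 0 < ∫ x, g x y ∂μ

namespace StrongMixing

variable {μ : Measure X} {q : X → X → ℝ} {g : X → Y → ℝ} {σm σp : ℝ}

lemma flip (hA : StrongMixing μ q g σm σp) : StrongMixing μ (flip q) g σm σp where
  __ := hA
  measurable_q := hA.measurable_q.comp measurable_swap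
  le_q a b := hA.le_q b a
  q_le a b := hA.q_le b a

lemma q_nonneg (hA : StrongMixing μ q g σm σp) (a b : X) : 0 ≤ q a b :=
  hA.σm_pos.le.trans (hA.le_q a b)

lemma boundedMeasurable_q (hA : StrongMixing μ q g σm σp) : BoundedMeasurable (uncurry q) :=
  ⟨hA.measurable_q, σp, fun p => (abs_of_nonneg (hA.q_nonneg p.1 p.2)).trans_le (hA.q_le p.1 p.2)⟩

lemma boundedMeasurable_q_left (hA : StrongMixing μ q g σm σp) (u : X) :
    BoundedMeasurable (q u) :=
  hA.boundedMeasurable_q.comp measurable_prodMk_left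

lemma boundedMeasurable_q_right (hA : StrongMixing μ q g σm σp) (v : X) :
    BoundedMeasurable fun u => q u v :=
  hA.boundedMeasurable_q.comp measurable_prodMk_right

lemma boundedMeasurable_g (hA : StrongMixing μ q g σm σp) (y : Y) :
    BoundedMeasurable fun x => g x y :=
  let ⟨C, hC⟩ := hA.bddAbove_g y
  ⟨hA.measurable_g y, C, fun x => by rw [abs_of_nonneg (hA.g_nonneg x y)]; exact hC x⟩

lemma σm_le_σp (hA : StrongMixing μ q g σm σp) [Nonempty X] : σm ≤ σp :=
  let ⟨x⟩ := ‹Nonempty X›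
  (hA.le_q x x).trans (hA.q_le x x)

lemma div_pos (hA : StrongMixing μ q g σm σp) [Nonempty X] : 0 < σm / σp :=
  _root_.div_pos hA.σm_pos (hA.σm_pos.trans_le hA.σm_le_σp)

lemma div_le_one (hA : StrongMixing μ q g σm σp) [Nonempty X] : σm / σp ≤ 1 :=
  (_root_.div_le_one (hA.σm_pos.trans_le hA.σm_le_σp)).2 hA.σm_le_σp

lemma mul_q_le (hA : StrongMixing μ q g σm σp) (a b c d : X) : σm / σp * q a b ≤ q c d := by
  have : Nonempty X := ⟨a⟩
  calc σm / σp * q a b ≤ σm / σp * σp := mul_le_mul_of_nonneg_left (hA.q_le a b) hA.div_pos.le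
    _ = σm := div_mul_cancel₀ σm (hA.σm_pos.trans_le hA.σm_le_σp).ne'
    _ ≤ q c d := hA.le_q c d

end StrongMixing

def transferOp (μ : Measure X) (q : X → X → ℝ) (g : X → Y → ℝ) (y : Y) (h : X → ℝ)
    (u : X) : ℝ :=
  ∫ v, g v y * q u v * h v ∂μ

section TransferOp

variable {μ : Measure X} {q : X → X → ℝ} {g : X → Y → ℝ} {σm σp : ℝ} {y : Y}
  {h h₁ h₂ : X → ℝ}

lemma transferOp_const_mul (c : ℝ) (h : X → ℝ) (u : X) :
    transferOp μ q g y (fun x => c * h x) u = c * transferOp μ q g y h u := by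
  rw [transferOp, transferOp, ← integral_const_mul]
  congr 1 with v
  ring

namespace StrongMixing

lemma boundedMeasurable_transferOp_integrand (hA : StrongMixing μ q g σm σp)
    (hh : BoundedMeasurable h) (u : X) :
    BoundedMeasurable fun v => g v y * q u v * h v :=
  ((hA.boundedMeasurable_g y).mul (hA.boundedMeasurable_q_left u)).mul hh

variable [IsFiniteMeasure μ]

lemma boundedMeasurable_transferOp (hA : StrongMixing μ q g σm σp) (hh : BoundedMeasurable h) :
    BoundedMeasurable (transferOp μ q g y h) :=
  BoundedMeasurable.integral_prod_right (F := fun p : X × X => g p.2 y * q p.1 p.2 * h p.2)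
    (((hA.boundedMeasurable_g y).comp measurable_snd).mul hA.boundedMeasurable_q |>.mul
      (hh.comp measurable_snd))

lemma transferOp_mono (hA : StrongMixing μ q g σm σp) (hh₁ : BoundedMeasurable h₁)
    (hh₂ : BoundedMeasurable h₂) (hle : ∀ x, h₁ x ≤ h₂ x) (u : X) :
    transferOp μ q g y h₁ u ≤ transferOp μ q g y h₂ u :=
  integral_mono (hA.boundedMeasurable_transferOp_integrand hh₁ u).integrable
    (hA.boundedMeasurable_transferOp_integrand hh₂ u).integrable fun v =>
      mul_le_mul_of_nonneg_left (hle v) (mul_nonneg (hA.g_nonneg v y) (hA.q_nonneg u v))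

lemma exists_pos_le_transferOp (hA : StrongMixing μ q g σm σp) (hh : BoundedMeasurable h)
    {c : ℝ} (hc : 0 < c) (hch : ∀ x, c ≤ h x) : ∃ c' > 0, ∀ u, c' ≤ transferOp μ q g y h u := by
  refine ⟨σm * c * ∫ v, g v y ∂μ, mul_pos (mul_pos hA.σm_pos hc) (hA.integral_g_pos y),
    fun u => ?_⟩
  rw [← integral_const_mul]
  refine integral_mono ((hA.boundedMeasurable_g y).integrable.const_mul _)
    (hA.boundedMeasurable_transferOp_integrand hh u).integrable fun v => ?_
  simp only
  rw [mul_comm, mul_assoc]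
  exact mul_le_mul_of_nonneg_left
    (mul_le_mul (hA.le_q u v) (hch v) hc.le (hA.q_nonneg u v)) (hA.g_nonneg v y)

lemma mul_transferOp_le (hA : StrongMixing μ q g σm σp) (hh : BoundedMeasurable h)
    (h0 : ∀ x, 0 ≤ h x) (a b : X) :
    σm / σp * transferOp μ q g y h b ≤ transferOp μ q g y h a := by
  rw [transferOp, ← integral_const_mul]
  refine integral_mono ((hA.boundedMeasurable_transferOp_integrand hh b).integrable.const_mul _)
    (hA.boundedMeasurable_transferOp_integrand hh a).integrable fun v => ?_
  calc σm / σp * (g v y * q b v * h v) = g v y * (σm / σp * q b v) * h v := by ring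
    _ ≤ g v y * q a v * h v := by
        gcongr
        · exact h0 v
        · exact hA.g_nonneg v y
        · exact hA.mul_q_le b v a v

lemma boundedMeasurable_transferOp_param (hA : StrongMixing μ q g σm σp) {F : X → X → ℝ}
    (hF : BoundedMeasurable (uncurry F)) :
    BoundedMeasurable (uncurry fun u v => transferOp μ q g y (fun w => F w v) u) :=
  BoundedMeasurable.integral_prod_right
    (F := fun p : (X × X) × X => g p.2 y * q p.1.1 p.2 * F p.2 p.1.2)
    ((((hA.boundedMeasurable_g y).comp measurable_snd).mul
      (hA.boundedMeasurable_q.comp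
        ((measurable_fst.comp measurable_fst).prodMk measurable_snd))).mul
      (hF.comp (measurable_snd.prodMk (measurable_snd.comp measurable_fst))))

lemma transferOp_integral (hA : StrongMixing μ q g σm σp) {F : X → X → ℝ}
    (hF : BoundedMeasurable (uncurry F)) (u : X) :
    transferOp μ q g y (fun w => ∫ v, F w v ∂μ) u =
      ∫ v, transferOp μ q g y (fun w => F w v) u ∂μ := by
  simp only [transferOp, ← integral_const_mul]
  have hK : BoundedMeasurable (uncurry fun w v => g w y * q u w * F w v) :=
    (((hA.boundedMeasurable_g y).mul (hA.boundedMeasurable_q_left u)).comp measurable_fst).mul hF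
  exact hK.integral_integral_swap

end StrongMixing

end TransferOp

def unnormFilter (μ ν : Measure X) (q : X → X → ℝ) (g : X → Y → ℝ) (ys : ℕ → Y) :
    ℕ → (X → ℝ) → ℝ
  | 0, h => ∫ x, g x (ys 0) * h x ∂ν
  | i + 1, h => unnormFilter μ ν q g ys i (transferOp μ q g (ys (i + 1)) h)

/-- The backward function at time `i` for the horizon `i + j`, with terminal function `γ`. -/
def backward (μ : Measure X) (q : X → X → ℝ) (g : X → Y → ℝ) (ys : ℕ → Y) (γ : X → ℝ) :
    ℕ → ℕ → X → ℝ
  | 0, _ => γ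
  | j + 1, i => transferOp μ q g (ys (i + 1)) (backward μ q g ys γ j (i + 1))

section FilterBackward

variable {μ ν : Measure X} {q : X → X → ℝ} {g : X → Y → ℝ} {ys : ℕ → Y} {σm σp : ℝ}

lemma unnormFilter_const_mul (i : ℕ) (c : ℝ) (h : X → ℝ) :
    unnormFilter μ ν q g ys i (fun x => c * h x) = c * unnormFilter μ ν q g ys i h := by
  induction i generalizing h with
  | zero =>
    simp only [unnormFilter, ← integral_const_mul]
    congr 1 with x
    ring
  | succ i ih =>
    simp only [unnormFilter]
    rw [← ih]
    exact congrArg _ (funext (transferOp_const_mul c h))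

lemma backward_add (γ : X → ℝ) (j j' i : ℕ) :
    backward μ q g ys γ (j + j') i = backward μ q g ys (backward μ q g ys γ j' (i + j)) j i := by
  induction j generalizing i with
  | zero => rw [Nat.zero_add, Nat.add_zero]; rfl
  | succ j ih =>
    rw [Nat.add_right_comm, backward, backward, ih, Nat.add_right_comm, Nat.add_assoc]

namespace StrongMixing

variable [IsFiniteMeasure μ] [IsFiniteMeasure ν]

lemma unnormFilter_mono (hA : StrongMixing μ q g σm σp) (i : ℕ) {h₁ h₂ : X → ℝ}
    (hh₁ : BoundedMeasurable h₁) (hh₂ : BoundedMeasurable h₂) (hle : ∀ x, h₁ x ≤ h₂ x) :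
    unnormFilter μ ν q g ys i h₁ ≤ unnormFilter μ ν q g ys i h₂ := by
  induction i generalizing h₁ h₂ with
  | zero =>
    exact integral_mono ((hA.boundedMeasurable_g _).mul hh₁).integrable
      ((hA.boundedMeasurable_g _).mul hh₂).integrable
      fun x => mul_le_mul_of_nonneg_left (hle x) (hA.g_nonneg x _)
  | succ i ih =>
    exact ih (hA.boundedMeasurable_transferOp hh₁) (hA.boundedMeasurable_transferOp hh₂)
      (hA.transferOp_mono hh₁ hh₂ hle)

lemma abs_unnormFilter_le (hA : StrongMixing μ q g σm σp) (i : ℕ) {h h' : X → ℝ}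
    (hh : BoundedMeasurable h) (hh' : BoundedMeasurable h') (hle : ∀ x, |h x| ≤ h' x) :
    |unnormFilter μ ν q g ys i h| ≤ unnormFilter μ ν q g ys i h' := by
  refine abs_le.2 ⟨?_, hA.unnormFilter_mono i hh hh' fun x => (le_abs_self _).trans (hle x)⟩
  have := hA.unnormFilter_mono (ν := ν) (ys := ys) i ((BoundedMeasurable.const (-1)).mul hh) hh'
    fun x => by linarith [neg_abs_le (h x), hle x]
  rw [unnormFilter_const_mul] at this
  linarith

lemma unnormFilter_pos (hA : StrongMixing μ q g σm σp) (hν : 0 < ∫ x, g x (ys 0) ∂ν) (i : ℕ)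
    {h : X → ℝ} (hh : BoundedMeasurable h) {c : ℝ} (hc : 0 < c) (hch : ∀ x, c ≤ h x) :
    0 < unnormFilter μ ν q g ys i h := by
  induction i generalizing h c with
  | zero =>
    exact integral_mul_pos_of_le (hA.boundedMeasurable_g _) (hA.g_nonneg · _) hν hh hc hch
  | succ i ih =>
    obtain ⟨c', hc', hle⟩ := hA.exists_pos_le_transferOp (y := ys (i + 1)) hh hc hch
    exact ih (hA.boundedMeasurable_transferOp hh) hc' hle

lemma boundedMeasurable_unnormFilter_param (hA : StrongMixing μ q g σm σp) (i : ℕ)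
    {F : X → X → ℝ} (hF : BoundedMeasurable (uncurry F)) :
    BoundedMeasurable fun v => unnormFilter μ ν q g ys i (fun u => F u v) := by
  induction i generalizing F with
  | zero =>
    exact BoundedMeasurable.integral_prod_right (F := fun p : X × X => g p.2 (ys 0) * F p.2 p.1)
      (((hA.boundedMeasurable_g _).comp measurable_snd).mul (hF.comp measurable_swap))
  | succ i ih => exact ih (hA.boundedMeasurable_transferOp_param hF)

lemma unnormFilter_integral (hA : StrongMixing μ q g σm σp) (i : ℕ) {F : X → X → ℝ}
    (hF : BoundedMeasurable (uncurry F)) :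
    unnormFilter μ ν q g ys i (fun u => ∫ v, F u v ∂μ) =
      ∫ v, unnormFilter μ ν q g ys i (fun u => F u v) ∂μ := by
  induction i generalizing F with
  | zero =>
    simp only [unnormFilter, ← integral_const_mul]
    exact BoundedMeasurable.integral_integral_swap (F := fun x v => g x (ys 0) * F x v)
      (((hA.boundedMeasurable_g _).comp measurable_fst).mul hF)
  | succ i ih =>
    simp only [unnormFilter]
    rw [show transferOp μ q g _ (fun w => ∫ v, F w v ∂μ) = _ from
      funext (hA.transferOp_integral hF)]
    exact ih (hA.boundedMeasurable_transferOp_param hF)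

lemma boundedMeasurable_backward (hA : StrongMixing μ q g σm σp) {γ : X → ℝ}
    (hγ : BoundedMeasurable γ) (j i : ℕ) : BoundedMeasurable (backward μ q g ys γ j i) := by
  induction j generalizing i with
  | zero => exact hγ
  | succ j ih => exact hA.boundedMeasurable_transferOp (ih (i + 1))

lemma exists_pos_le_backward_one (hA : StrongMixing μ q g σm σp) (j i : ℕ) :
    ∃ c > 0, ∀ x, c ≤ backward μ q g ys (fun _ => 1) j i x := by
  induction j generalizing i with
  | zero => exact ⟨1, one_pos, fun _ => le_rfl⟩
  | succ j ih =>
    obtain ⟨c, hc, hle⟩ := ih (i + 1)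
    exact hA.exists_pos_le_transferOp (hA.boundedMeasurable_backward (.const 1) j (i + 1)) hc hle

lemma mul_backward_one_le (hA : StrongMixing μ q g σm σp) (j i : ℕ) (a b : X) :
    σm / σp * backward μ q g ys (fun _ => 1) j i b ≤ backward μ q g ys (fun _ => 1) j i a := by
  cases j with
  | zero =>
    have : Nonempty X := ⟨a⟩
    simpa only [backward, mul_one] using hA.div_le_one
  | succ j =>
    obtain ⟨c, hc, hle⟩ := hA.exists_pos_le_backward_one (ys := ys) j (i + 1)
    exact hA.mul_transferOp_le (hA.boundedMeasurable_backward (.const 1) j (i + 1))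
      (fun x => hc.le.trans (hle x)) a b

end StrongMixing

end FilterBackward

section PathIntegral

variable {μ ν : Measure X} {q : X → X → ℝ} {g : X → Y → ℝ} {ys : ℕ → Y} {m : ℕ}
  {f : (ℕ → X) → ℝ} {S : Set ℕ}

/-- After `j` integration steps the coordinates above `m - j` have been integrated out, and
the coordinate `m - j` is still read through the transition density. -/
lemma LF_dependsOn (hf : DependsOn f S) (hS : ∀ i ∈ S, i ≤ m) {j : ℕ} (hj : j ≤ m) :
    DependsOn (LF μ q g ys m j f) (insert (m - j) {i | i ∈ S ∧ i < m - j}) := by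
  induction j with
  | zero =>
    refine hf.mono fun i hi => ?_
    rcases (hS i hi).lt_or_eq with h | h
    · exact Or.inr ⟨hi, h⟩
    · exact Or.inl h
  | succ j ih =>
    intro x y hxy
    simp only [LF]
    rw [hxy (m - j - 1) (Or.inl (by omega))]
    congr 1 with w
    congr 1
    refine ih (by omega) fun i hi => ?_
    rcases hi with rfl | ⟨hiS, hi⟩
    · simp
    rw [update_of_ne (by omega), update_of_ne (by omega)]
    rcases (show i ≤ m - (j + 1) by omega).eq_or_lt with rfl | hlt
    · exact hxy _ (Or.inl rfl)
    · exact hxy _ (Or.inr ⟨hiS, hlt⟩)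

lemma LF_eq_LF_const {a i : ℕ} (hf : DependsOn f S) (hS : S ⊆ Icc a m) (ham : a ≤ m)
    (hia : i ≤ a) (x : ℕ → X) :
    LF μ q g ys m (m - i) f x = LF μ q g ys m (m - i) f (fun _ => x i) := by
  refine LF_dependsOn hf (fun l hl => (hS hl).2) (Nat.sub_le m i) fun l hl => ?_
  rw [Nat.sub_sub_self (hia.trans ham)] at hl
  rcases hl with rfl | ⟨hlS, hl⟩
  · rfl
  · exact absurd (hS hlS).1 (by omega)

lemma integral_LF_eq_unnormFilter {a i : ℕ} (hf : DependsOn f S) (hS : S ⊆ Icc a m)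
    (ham : a ≤ m) (hia : i ≤ a) :
    ∫ x₀, g x₀ (ys 0) * LF μ q g ys m m f (fun _ => x₀) ∂ν =
      unnormFilter μ ν q g ys i (fun u => LF μ q g ys m (m - i) f (fun _ => u)) := by
  induction i with
  | zero => rfl
  | succ i ih =>
    rw [ih (by omega), unnormFilter]
    congr 1 with u
    rw [show m - i = m - (i + 1) + 1 by omega, LF, show m - (m - (i + 1)) = i + 1 by omega]
    congr 1 with v
    rw [LF_eq_LF_const hf hS ham hia, update_self]

lemma LF_eq_mul_backward {j : ℕ} (hf : DependsOn f (Iic (m - j))) (hj : j ≤ m) (x : ℕ → X) :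
    LF μ q g ys m j f x = f x * backward μ q g ys (fun _ => 1) j (m - j) (x (m - j)) := by
  induction j generalizing x with
  | zero => simp [LF, backward]
  | succ j ih =>
    rw [LF, backward, show m - (j + 1) + 1 = m - j by omega, transferOp,
      ← integral_const_mul]
    congr 1 with v
    rw [ih (hf.mono (Iic_subset_Iic.2 (by omega))) (by omega), update_self,
      hf fun i hi => update_of_ne (by simp only [mem_Iic] at hi; omega) _ _,
      show m - j - 1 = m - (j + 1) by omega]
    ring

end PathIntegral

/-- The unnormalised law of `(x_k, x_{k+1})` weighted by `s`, propagated forward to a density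
of `x_{k+1+t}` given `y_{0:k+t}`. -/
def pairForward (μ ν : Measure X) (q : X → X → ℝ) (g : X → Y → ℝ) (ys : ℕ → Y)
    (s : X → X → ℝ) (k : ℕ) : ℕ → X → ℝ
  | 0, w => unnormFilter μ ν q g ys k (fun u => q u w * s u w)
  | t + 1, w => transferOp μ (flip q) g (ys (k + 1 + t)) (pairForward μ ν q g ys s k t) w

/-- `E[s(x_k, x_{k+1}) | x_{k+1+t} = w, y_{0:k+t}]`. -/
def pairCondExp (μ ν : Measure X) (q : X → X → ℝ) (g : X → Y → ℝ) (ys : ℕ → Y)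
    (s : X → X → ℝ) (k t : ℕ) (w : X) : ℝ :=
  pairForward μ ν q g ys s k t w / pairForward μ ν q g ys (fun _ _ => 1) k t w

namespace StrongMixing

variable {μ ν : Measure X} [IsFiniteMeasure μ] [IsFiniteMeasure ν] {q : X → X → ℝ}
  {g : X → Y → ℝ} {ys : ℕ → Y} {σm σp : ℝ} {s : X → X → ℝ} {k : ℕ}

lemma boundedMeasurable_pairForward (hA : StrongMixing μ q g σm σp)
    (hs : BoundedMeasurable (uncurry s)) (t : ℕ) :
    BoundedMeasurable (pairForward μ ν q g ys s k t) := by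
  induction t with
  | zero => exact hA.boundedMeasurable_unnormFilter_param k (hA.boundedMeasurable_q.mul hs)
  | succ t ih => exact hA.flip.boundedMeasurable_transferOp ih

lemma boundedMeasurable_pairForward_one (hA : StrongMixing μ q g σm σp) (t : ℕ) :
    BoundedMeasurable (pairForward μ ν q g ys (fun _ _ => 1) k t) :=
  hA.boundedMeasurable_pairForward (s := fun _ _ => 1) (.const 1) t

lemma exists_pos_le_pairForward_one (hA : StrongMixing μ q g σm σp)
    (hν : 0 < ∫ x, g x (ys 0) ∂ν) (t : ℕ) :
    ∃ c > 0, ∀ w, c ≤ pairForward μ ν q g ys (fun _ _ => 1) k t w := by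
  induction t with
  | zero =>
    refine ⟨σm * unnormFilter μ ν q g ys k (fun _ => 1),
      mul_pos hA.σm_pos (hA.unnormFilter_pos hν k (.const 1) one_pos fun _ => le_rfl),
      fun w => ?_⟩
    rw [← mul_one σm, ← unnormFilter_const_mul, mul_one]
    exact hA.unnormFilter_mono k ((BoundedMeasurable.const σm).mul (.const 1))
      ((hA.boundedMeasurable_q_right w).mul (.const 1)) fun u => by simpa using hA.le_q u w
  | succ t ih =>
    obtain ⟨c, hc, hle⟩ := ih
    exact hA.flip.exists_pos_le_transferOp (hA.boundedMeasurable_pairForward_one t) hc hle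

lemma pairForward_one_nonneg (hA : StrongMixing μ q g σm σp) (hν : 0 < ∫ x, g x (ys 0) ∂ν)
    (t : ℕ) (w : X) : 0 ≤ pairForward μ ν q g ys (fun _ _ => 1) k t w :=
  let ⟨_, hc, hle⟩ := hA.exists_pos_le_pairForward_one (k := k) hν t
  hc.le.trans (hle w)

lemma integral_g_mul_pairForward_one_mul_pos (hA : StrongMixing μ q g σm σp)
    (hν : 0 < ∫ x, g x (ys 0) ∂ν) {y : Y} (t : ℕ) {h : X → ℝ} (hh : BoundedMeasurable h)
    {c : ℝ} (hc : 0 < c) (hch : ∀ x, c ≤ h x) :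
    0 < ∫ v, g v y * pairForward μ ν q g ys (fun _ _ => 1) k t v * h v ∂μ := by
  obtain ⟨c', hc', hle⟩ := hA.exists_pos_le_pairForward_one (k := k) hν t
  have hpF := hA.boundedMeasurable_pairForward_one (ν := ν) (ys := ys) (k := k) t
  exact integral_mul_pos_of_le ((hA.boundedMeasurable_g y).mul hpF)
    (fun v => mul_nonneg (hA.g_nonneg v y) (hA.pairForward_one_nonneg hν t v))
    (integral_mul_pos_of_le (hA.boundedMeasurable_g y) (hA.g_nonneg · y) (hA.integral_g_pos y)
      hpF hc' hle) hh hc hch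

lemma pairForward_eq_mul_pairCondExp (hA : StrongMixing μ q g σm σp)
    (hν : 0 < ∫ x, g x (ys 0) ∂ν) (t : ℕ) (w : X) :
    pairForward μ ν q g ys s k t w =
      pairForward μ ν q g ys (fun _ _ => 1) k t w * pairCondExp μ ν q g ys s k t w := by
  obtain ⟨c, hc, hle⟩ := hA.exists_pos_le_pairForward_one (k := k) hν t
  exact (mul_div_cancel₀ _ (hc.trans_le (hle w)).ne').symm

lemma pairCondExp_succ (hA : StrongMixing μ q g σm σp) (hν : 0 < ∫ x, g x (ys 0) ∂ν)
    (t : ℕ) (w : X) :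
    pairCondExp μ ν q g ys s k (t + 1) w =
      tiltedMean μ (fun v => g v (ys (k + 1 + t)) * pairForward μ ν q g ys (fun _ _ => 1) k t v)
        (fun v => q v w) (pairCondExp μ ν q g ys s k t) := by
  rw [pairCondExp, tiltedMean, pairForward, pairForward, transferOp, transferOp]
  congr 1 <;> congr 1 with v
  · rw [hA.pairForward_eq_mul_pairCondExp hν, _root_.flip]
    ring
  · rw [_root_.flip]
    ring

lemma abs_pairCondExp_le (hA : StrongMixing μ q g σm σp) (hν : 0 < ∫ x, g x (ys 0) ∂ν)
    (hs : BoundedMeasurable (uncurry s)) {Cs : ℝ} (hCs : ∀ a b, |s a b| ≤ Cs) (t : ℕ)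
    (w : X) : |pairCondExp μ ν q g ys s k t w| ≤ Cs := by
  induction t generalizing w with
  | zero =>
    obtain ⟨c, hc, hle⟩ := hA.exists_pos_le_pairForward_one (k := k) hν 0
    have hpos := hc.trans_le (hle w)
    rw [pairCondExp, abs_div, abs_of_pos hpos, div_le_iff₀ hpos, pairForward, pairForward,
      ← unnormFilter_const_mul]
    refine hA.abs_unnormFilter_le k
      ((hA.boundedMeasurable_q_right w).mul (hs.comp measurable_prodMk_right))
      ((BoundedMeasurable.const Cs).mul ((hA.boundedMeasurable_q_right w).mul (.const 1)))
      fun u => ?_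
    rw [abs_mul, abs_of_nonneg (hA.q_nonneg u w), mul_one, mul_comm Cs]
    exact mul_le_mul_of_nonneg_left (hCs u w) (hA.q_nonneg u w)
  | succ t ih =>
    rw [hA.pairCondExp_succ hν]
    exact abs_tiltedMean_le
      ((hA.boundedMeasurable_g _).mul (hA.boundedMeasurable_pairForward_one t))
      (hA.boundedMeasurable_q_right w)
      ⟨(hA.boundedMeasurable_pairForward hs t).1.div
        (hA.boundedMeasurable_pairForward_one t).1, Cs, ih⟩
      (fun v => mul_nonneg (mul_nonneg (hA.g_nonneg v _) (hA.pairForward_one_nonneg hν t v))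
        (hA.q_nonneg v w))
      (hA.integral_g_mul_pairForward_one_mul_pos hν t (hA.boundedMeasurable_q_right w) hA.σm_pos
        fun v => hA.le_q v w) ih

lemma boundedMeasurable_pairCondExp (hA : StrongMixing μ q g σm σp)
    (hν : 0 < ∫ x, g x (ys 0) ∂ν) (hs : BoundedMeasurable (uncurry s))
    {Cs : ℝ} (hCs : ∀ a b, |s a b| ≤ Cs) (t : ℕ) :
    BoundedMeasurable (pairCondExp μ ν q g ys s k t) :=
  ⟨(hA.boundedMeasurable_pairForward hs t).1.div
    (hA.boundedMeasurable_pairForward_one t).1, Cs, hA.abs_pairCondExp_le hν hs hCs t⟩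

lemma abs_pairCondExp_sub_le (hA : StrongMixing μ q g σm σp) (hν : 0 < ∫ x, g x (ys 0) ∂ν)
    (hs : BoundedMeasurable (uncurry s)) {Cs : ℝ} (hCs : ∀ a b, |s a b| ≤ Cs) (t : ℕ)
    (x y : X) :
    |pairCondExp μ ν q g ys s k t x - pairCondExp μ ν q g ys s k t y| ≤
      2 * Cs * (1 - σm / σp) ^ t := by
  have : Nonempty X := ⟨x⟩
  induction t generalizing x y with
  | zero =>
    rw [pow_zero, mul_one, two_mul]
    exact (abs_sub _ _).trans (add_le_add (hA.abs_pairCondExp_le hν hs hCs 0 x)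
      (hA.abs_pairCondExp_le hν hs hCs 0 y))
  | succ t ih =>
    rw [hA.pairCondExp_succ hν, hA.pairCondExp_succ hν, pow_succ]
    calc _ ≤ (1 - σm / σp) * (2 * Cs * (1 - σm / σp) ^ t) :=
          abs_tiltedMean_sub_le
            ((hA.boundedMeasurable_g _).mul (hA.boundedMeasurable_pairForward_one t))
            (fun v => mul_nonneg (hA.g_nonneg v _) (hA.pairForward_one_nonneg hν t v))
            (hA.boundedMeasurable_q_right x) (hA.boundedMeasurable_q_right y)
            (hA.boundedMeasurable_pairCondExp hν hs hCs t) hA.div_pos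
            (fun a b => hA.mul_q_le b x a x) (fun a b => hA.mul_q_le b y a y)
            (hA.integral_g_mul_pairForward_one_mul_pos hν t (hA.boundedMeasurable_q_right x)
              hA.σm_pos fun v => hA.le_q v x)
            (hA.integral_g_mul_pairForward_one_mul_pos hν t (hA.boundedMeasurable_q_right y)
              hA.σm_pos fun v => hA.le_q v y)
            ih
      _ = _ := by ring

/-- Forward and backward propagation are adjoint: `j` backward steps can be traded for `j`
forward steps. -/
lemma integral_pairForward_mul_backward (hA : StrongMixing μ q g σm σp)
    (hs : BoundedMeasurable (uncurry s)) {γ : X → ℝ} (hγ : BoundedMeasurable γ) (j t : ℕ) :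
    ∫ v, g v (ys (k + 1 + t)) * pairForward μ ν q g ys s k t v *
        backward μ q g ys γ j (k + 1 + t) v ∂μ =
      ∫ v, g v (ys (k + 1 + t + j)) * pairForward μ ν q g ys s k (t + j) v * γ v ∂μ := by
  induction j generalizing t with
  | zero => rfl
  | succ j ih =>
    have ih' := ih (t + 1)
    rw [show k + 1 + (t + 1) = k + 1 + t + 1 by omega] at ih'
    rw [show k + 1 + t + (j + 1) = k + 1 + t + 1 + j by omega,
      show t + (j + 1) = t + 1 + j by omega, ← ih', backward]
    have hF : BoundedMeasurable (uncurry fun v w => g v (ys (k + 1 + t)) *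
        pairForward μ ν q g ys s k t v *
        (g w (ys (k + 1 + t + 1)) * q v w * backward μ q g ys γ j (k + 1 + t + 1) w)) :=
      (((hA.boundedMeasurable_g _).mul (hA.boundedMeasurable_pairForward hs t)).comp
        measurable_fst).mul ((((hA.boundedMeasurable_g _).comp measurable_snd).mul
          hA.boundedMeasurable_q).mul
            ((hA.boundedMeasurable_backward hγ j _).comp measurable_snd))
    simp only [pairForward, transferOp, ← integral_const_mul, ← integral_mul_const]
    rw [hF.integral_integral_swap]
    congr 1 with w
    congr 1 with v
    rw [_root_.flip]
    ring

lemma integral_LF_pair (hA : StrongMixing μ q g σm σp) (hs : BoundedMeasurable (uncurry s))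
    {m : ℕ} (hkm : k + 1 ≤ m) :
    ∫ x₀, g x₀ (ys 0) * LF μ q g ys m m (fun x => s (x k) (x (k + 1))) (fun _ => x₀) ∂ν =
      ∫ v, g v (ys (k + 1)) * pairForward μ ν q g ys s k 0 v *
        backward μ q g ys (fun _ => 1) (m - (k + 1)) (k + 1) v ∂μ := by
  set β := backward μ q g ys (fun _ => 1) (m - (k + 1)) (k + 1)
  have hf : DependsOn (fun x : ℕ → X => s (x k) (x (k + 1))) {k, k + 1} :=
    fun x y h => show s (x k) (x (k + 1)) = s (y k) (y (k + 1)) by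
      rw [h k (by simp), h (k + 1) (by simp)]
  have hstep : ∀ u, LF μ q g ys m (m - k) (fun x => s (x k) (x (k + 1))) (fun _ => u) =
      ∫ v, g v (ys (k + 1)) * q u v * s u v * β v ∂μ := fun u => by
    rw [show m - k = m - (k + 1) + 1 by omega, LF, Nat.sub_sub_self hkm]
    congr 1 with v
    rw [LF_eq_mul_backward (hf.mono ?_) (Nat.sub_le _ _), Nat.sub_sub_self hkm, update_self,
      update_of_ne (by omega)]
    · ring
    · rw [Nat.sub_sub_self hkm]
      simp [insert_subset_iff]
  have hF : BoundedMeasurable (uncurry fun u v => g v (ys (k + 1)) * q u v * s u v * β v) :=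
    ((((hA.boundedMeasurable_g _).comp measurable_snd).mul hA.boundedMeasurable_q).mul hs).mul
      ((hA.boundedMeasurable_backward (.const 1) _ _).comp measurable_snd)
  rw [integral_LF_eq_unnormFilter hf (a := k)
    (fun i hi => by obtain rfl | rfl := hi <;> exact ⟨by omega, by omega⟩) (by omega) le_rfl]
  simp only [hstep]
  rw [hA.unnormFilter_integral k hF]
  congr 1 with v
  rw [pairForward, mul_right_comm, ← unnormFilter_const_mul]
  congr 1 with u
  ring

lemma integral_LF_pair_eq_backward (hA : StrongMixing μ q g σm σp)
    (hs : BoundedMeasurable (uncurry s)) {m Δ : ℕ} (hΔ : 1 ≤ Δ) (hm : k + Δ ≤ m) :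
    ∫ x₀, g x₀ (ys 0) * LF μ q g ys m m (fun x => s (x k) (x (k + 1))) (fun _ => x₀) ∂ν =
      ∫ w, g w (ys (k + Δ)) * pairForward μ ν q g ys s k (Δ - 1) w *
        backward μ q g ys (fun _ => 1) (m - (k + Δ)) (k + Δ) w ∂μ := by
  have h := hA.integral_pairForward_mul_backward (ν := ν) (ys := ys) (k := k) hs
    (hA.boundedMeasurable_backward (ys := ys) (.const 1) (m - (k + Δ)) (k + Δ)) (Δ - 1) 0
  rw [hA.integral_LF_pair hs (by omega), show m - (k + 1) = Δ - 1 + (m - (k + Δ)) by omega,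
    backward_add, show k + 1 + (Δ - 1) = k + Δ by omega]
  simpa only [Nat.add_zero, Nat.zero_add, show k + 1 + (Δ - 1) = k + Δ by omega] using h

lemma smoothExp_pair_eq_tiltedMean (hA : StrongMixing μ q g σm σp)
    (hν : 0 < ∫ x, g x (ys 0) ∂ν) (hs : BoundedMeasurable (uncurry s)) {m Δ : ℕ}
    (hΔ : 1 ≤ Δ) (hm : k + Δ ≤ m) :
    smoothExp μ ν q g ys m (fun x => s (x k) (x (k + 1))) =
      tiltedMean μ (fun w => g w (ys (k + Δ)) * pairForward μ ν q g ys (fun _ _ => 1) k (Δ - 1) w)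
        (backward μ q g ys (fun _ => 1) (m - (k + Δ)) (k + Δ))
        (pairCondExp μ ν q g ys s k (Δ - 1)) := by
  have h₁ := hA.integral_LF_pair_eq_backward (ν := ν) (ys := ys) (s := fun _ _ => 1) (.const 1)
    hΔ hm
  rw [smoothExp, tiltedMean, hA.integral_LF_pair_eq_backward hs hΔ hm, h₁]
  congr 1
  congr 1 with w
  rw [hA.pairForward_eq_mul_pairCondExp hν]
  ring

theorem abs_smoothExp_pair_sub_le (hA : StrongMixing μ q g σm σp)
    (hν : 0 < ∫ x, g x (ys 0) ∂ν) (hs : BoundedMeasurable (uncurry s)) {Cs : ℝ}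
    (hCs : ∀ a b, |s a b| ≤ Cs) {m₁ m₂ Δ : ℕ} (hΔ : 1 ≤ Δ) (hm₁ : k + Δ ≤ m₁)
    (hm₂ : k + Δ ≤ m₂) :
    |smoothExp μ ν q g ys m₁ (fun x => s (x k) (x (k + 1))) -
        smoothExp μ ν q g ys m₂ (fun x => s (x k) (x (k + 1)))| ≤
      2 * (1 - σm / σp) ^ Δ * Cs := by
  have hβ := fun m => hA.boundedMeasurable_backward (ys := ys) (.const 1) (m - (k + Δ)) (k + Δ)
  have hZ : ∀ m, 0 < ∫ w, g w (ys (k + Δ)) * pairForward μ ν q g ys (fun _ _ => 1) k (Δ - 1) w *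
      backward μ q g ys (fun _ => 1) (m - (k + Δ)) (k + Δ) w ∂μ := fun m =>
    let ⟨_, hc, hle⟩ := hA.exists_pos_le_backward_one (ys := ys) (m - (k + Δ)) (k + Δ)
    hA.integral_g_mul_pairForward_one_mul_pos hν (Δ - 1) (hβ m) hc hle
  rw [hA.smoothExp_pair_eq_tiltedMean hν hs hΔ hm₁, hA.smoothExp_pair_eq_tiltedMean hν hs hΔ hm₂]
  have := nonempty_of_integral_ne_zero hν.ne'
  calc _ ≤ (1 - σm / σp) * (2 * Cs * (1 - σm / σp) ^ (Δ - 1)) :=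
        abs_tiltedMean_sub_le
          ((hA.boundedMeasurable_g _).mul (hA.boundedMeasurable_pairForward_one _))
          (fun w => mul_nonneg (hA.g_nonneg w _) (hA.pairForward_one_nonneg hν _ w))
          (hβ m₁) (hβ m₂) (hA.boundedMeasurable_pairCondExp hν hs hCs _) hA.div_pos
          (hA.mul_backward_one_le _ _) (hA.mul_backward_one_le _ _) (hZ m₁) (hZ m₂)
          (hA.abs_pairCondExp_sub_le hν hs hCs _)
    _ = 2 * (1 - σm / σp) ^ Δ * Cs := by
        conv_rhs => rw [← Nat.sub_add_cancel hΔ, pow_succ]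
        ring

end StrongMixing

/-- **Inequality (A.14).** Assume (A1). For integers `k ≥ 0`, `Δ ≥ 1`, `n` with
`k + Δ ≤ n` and bounded measurable `s` on `X²`,
`|φ_{ν,0:k+Δ|k+Δ} s_k − φ_{ν,0:n|n} s_k| ≤ 2 ρ^Δ ‖s‖_∞`, `ρ = 1 − σ₋/σ₊`. -/
theorem fixed_lag_forgetting_bound
    (μ : Measure X) [IsProbabilityMeasure μ]
    (q : X → X → ℝ) (g : X → Y → ℝ) (ys : ℕ → Y)
    (σm σp : ℝ)
    (hσm : 0 < σm)
    (hq_meas : Measurable (Function.uncurry q))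
    (hq_low : ∀ a b, σm ≤ q a b) (hq_up : ∀ a b, q a b ≤ σp)
    (hg_meas : ∀ yv, Measurable fun x => g x yv)
    (hg_nonneg : ∀ x yv, 0 ≤ g x yv)
    (hg_bdd : ∀ yv, ∃ C, ∀ x, g x yv ≤ C)
    (hg_pos : ∀ yv, 0 < ∫ x, g x yv ∂μ)
    (ν : Measure X) [IsProbabilityMeasure ν]
    (k Δ n : ℕ) (hΔ : 1 ≤ Δ) (hkΔn : k + Δ ≤ n)
    (s : X → X → ℝ) (hs_meas : Measurable (Function.uncurry s))
    (Cs : ℝ) (hCs : ∀ a b, |s a b| ≤ Cs) :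
    |smoothExp μ ν q g ys (k + Δ) (fun x => s (x k) (x (k + 1))) -
        smoothExp μ ν q g ys n (fun x => s (x k) (x (k + 1)))| ≤
      2 * (1 - σm / σp) ^ Δ * Cs := by
  have hA : StrongMixing μ q g σm σp :=
    ⟨hσm, hq_meas, hq_low, hq_up, hg_meas, hg_nonneg, hg_bdd, hg_pos⟩
  rcases (integral_nonneg (hg_nonneg · (ys 0)) : 0 ≤ ∫ x, g x (ys 0) ∂ν).eq_or_lt with hν | hν
  · -- both normalising constants vanish, and `smoothExp` is then `_ / 0 = 0`
    have := nonempty_of_isProbabilityMeasure μ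
    have hρ := sub_nonneg.2 hA.div_le_one
    have hCs := (abs_nonneg _).trans (hCs (Classical.arbitrary X) (Classical.arbitrary X))
    simp only [smoothExp, integral_mul_eq_zero_of_integral_eq_zero (hg_nonneg · (ys 0))
      (hA.boundedMeasurable_g _).integrable hν.symm, div_zero, sub_self, abs_zero]
    positivity
  · exact hA.abs_smoothExp_pair_sub_le hν ⟨hs_meas, Cs, fun p => hCs p.1 p.2⟩ hCs hΔ le_rfl hkΔn

end
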